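/- arXiv:2605.19636 — 2 statements merged into one kernel-verified Lean document; each statement's English description precedes it below -/
import Mathlib

section
/- Let K be a field, q ∈ K with q³ = 1 and q ≠ 1 (q a primitive 3rd root of unity). Let V be the graded vector space ⊕_{k₁,k₂,k₃ ≥ 0} K·(e^{k₁} ⊗ e^{k₂} ⊗ e^{k₃}), with e^{k₁} ⊗ e^{k₂} ⊗ e^{k₃} placed in degree k₂ + 2k₃. Define δ by δ(e^{k₁} ⊗ e^{k₂} ⊗ e^{k₃}) = [k₁]_{q²} · e^{k₁-1} ⊗ e^{k₂+1} ⊗ e^{k₃} + q^{2k₂}[k₂]_{q²} · e^{k₁} ⊗ e^{k₂-1} ⊗ e^{k₃+1}, where [m]_{q²} = 1 + q² + ... + q^{2(m-1)} (terms with a negative exponent are zero). Then δ³ = 0. -/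
/-- The quantum integer `[m]_t = 1 + t + ⋯ + t^{m-1}`. -/
def qInt {K : Type} [Field K] (t : K) (m : ℕ) : K := ∑ i ∈ Finset.range m, t ^ i

/-- The Gaussian (quantum) binomial coefficient, defined by the q-Pascal recurrence
`binom(n+1,k+1)_t = binom(n,k)_t + t^{k+1} binom(n,k+1)_t`. -/
def gaussBinom {K : Type} [Field K] (t : K) : ℕ → ℕ → K
  | _, 0 => 1
  | 0, _ + 1 => 0
  | n + 1, k + 1 => gaussBinom t n k + t ^ (k + 1) * gaussBinom t n (k + 1)

/-- The total space of `B_*(1)`: the free vector space on basis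
`e^{k₁} ⊗ e^{k₂} ⊗ e^{k₃}`, indexed by triples `(k₁,k₂,k₃)`. -/
abbrev BV (K : Type) [Field K] : Type := (ℕ × ℕ × ℕ) →₀ K

/-- The 3-differential `δ` of the quantum Troesch complex at `n = 1`:
`δ(e^{k₁}⊗e^{k₂}⊗e^{k₃}) = [k₁]_{q²} e^{k₁-1}⊗e^{k₂+1}⊗e^{k₃}
  + q^{2k₂}[k₂]_{q²} e^{k₁}⊗e^{k₂-1}⊗e^{k₃+1}`
(the quantum-integer coefficients vanish when the corresponding exponent is 0). -/
noncomputable def deltaV {K : Type} [Field K] (q : K) : BV K →ₗ[K] BV K :=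
  Finsupp.linearCombination K (fun k : ℕ × ℕ × ℕ =>
    qInt (q ^ 2) k.1 • Finsupp.single (k.1 - 1, k.2.1 + 1, k.2.2) (1 : K)
    + (q ^ (2 * k.2.1) * qInt (q ^ 2) k.2.1) •
        Finsupp.single (k.1, k.2.1 - 1, k.2.2 + 1) (1 : K))

/- ### Auxiliary lemmas -/

lemma qInt_zero' {K : Type} [Field K] (t : K) : qInt t 0 = 0 := by simp [qInt]

lemma qInt_succ' {K : Type} [Field K] (t : K) (m : ℕ) :
    qInt t (m+1) = qInt t m + t ^ m := by
  simp [qInt, Finset.sum_range_succ]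

lemma qInt_key0 {K : Type} [Field K] (q : K) (hS : 1 + q^2 + q^4 = 0) (m : ℕ) :
    qInt (q^2) m + q^2 * qInt (q^2) (m+1) + q^4 * qInt (q^2) (m+2) = 0 := by
  simp only [qInt_succ', ← pow_mul]
  linear_combination (qInt (q^2) m + q^2 * q^(2*m)) * hS

lemma qInt_per {K : Type} [Field K] (q : K) (hS : 1 + q^2 + q^4 = 0) (m : ℕ) :
    qInt (q^2) (m+3) = qInt (q^2) m := by
  simp only [qInt_succ', ← pow_mul]
  linear_combination q^(2*m) * hS

lemma qInt_mod3 {K : Type} [Field K] (q : K) (hS : 1 + q^2 + q^4 = 0) (m : ℕ) :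
    qInt (q^2) m = qInt (q^2) (m % 3) := by
  induction m using Nat.strong_induction_on with
  | _ m ih =>
    match m with
    | 0 => rfl
    | 1 => rfl
    | 2 => rfl
    | (n+3) =>
      rw [qInt_per q hS n, show (n+3) % 3 = n % 3 by omega]
      exact ih n (by omega)

lemma qInt_triple {K : Type} [Field K] (q : K) (hS : 1 + q^2 + q^4 = 0) (m : ℕ) :
    qInt (q^2) (2+m) * qInt (q^2) (1+m) * qInt (q^2) m = 0 := by
  rcases (by omega : m % 3 = 0 ∨ m % 3 = 1 ∨ m % 3 = 2) with h | h | h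
  · rw [qInt_mod3 q hS m, h, qInt_zero', mul_zero]
  · rw [qInt_mod3 q hS (2+m), show (2+m) % 3 = 0 by omega, qInt_zero', zero_mul, zero_mul]
  · rw [qInt_mod3 q hS (1+m), show (1+m) % 3 = 0 by omega, qInt_zero', mul_zero, zero_mul]

lemma deltaV_single {K : Type} [Field K] (q : K) (a b c : ℕ) :
    deltaV q (Finsupp.single (a,b,c) 1) =
      qInt (q^2) a • Finsupp.single (a-1, b+1, c) (1:K)
      + (q ^ (2*b) * qInt (q^2) b) • Finsupp.single (a, b-1, c+1) (1:K) := by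
  simp [deltaV, Finsupp.linearCombination_single]

/-- for `q` a primitive 3rd root of unity, the map `δ` on the graded
vector space with basis `e^{k₁}⊗e^{k₂}⊗e^{k₃}` (in degree `k₂+2k₃`) satisfies `δ³ = 0`. -/
theorem deltaV_cube_eq_zero {K : Type} [Field K] (q : K) (hq3 : q ^ 3 = 1) (hq1 : q ≠ 1) :
    (deltaV q).comp ((deltaV q).comp (deltaV q)) = 0 := by
  have hq : q^2 + q + 1 = 0 := by
    have h : (q - 1) * (q^2 + q + 1) = 0 := by linear_combination hq3
    exact (mul_eq_zero.mp h).resolve_left (sub_ne_zero.mpr hq1)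
  have hS : 1 + q^2 + q^4 = 0 := by linear_combination hq + q * hq3
  have hT1 : qInt (q^2) 1 = 1 := by rw [qInt_succ', qInt_zero']; ring
  have hT2 : qInt (q^2) 2 = 1 + q^2 := by
    rw [qInt_succ', qInt_succ', qInt_zero']; ring
  have hT3 : qInt (q^2) 3 = 0 := by
    rw [qInt_succ', qInt_succ', qInt_succ', qInt_zero']; linear_combination hS
  have hA : ∀ m : ℕ, qInt (q^2) m + q^2 * qInt (q^2) (1+m) + q^4 * qInt (q^2) (2+m) = 0 := by
    intro m
    have h := qInt_key0 q hS m
    rwa [add_comm m 1, add_comm m 2] at h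
  have hB : ∀ m : ℕ, qInt (q^2) (1+m) + q^2 * qInt (q^2) (2+m) + q^4 * qInt (q^2) (3+m) = 0 := by
    intro m
    have h := qInt_key0 q hS (m+1)
    rwa [show m+1+1 = 2+m by omega, show m+1+2 = 3+m by omega, add_comm m 1] at h
  have hC : ∀ m : ℕ, qInt (q^2) (2+m) + q^2 * qInt (q^2) (3+m) + q^4 * qInt (q^2) (4+m) = 0 := by
    intro m
    have h := qInt_key0 q hS (m+2)
    rwa [show m+2+1 = 3+m by omega, show m+2+2 = 4+m by omega, add_comm m 2] at h
  refine Finsupp.lhom_ext fun k v => ?_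
  obtain ⟨a, b, c⟩ := k
  suffices h : deltaV q (deltaV q (deltaV q (Finsupp.single (a,b,c) (1:K)))) = 0 by
    have hv : Finsupp.single (a,b,c) v = v • Finsupp.single (a,b,c) (1:K) := by
      simp [Finsupp.smul_single']
    simp only [hv, map_smul, LinearMap.comp_apply, LinearMap.zero_apply, h, smul_zero]
  rcases a with _ | _ | a <;> rcases b with _ | _ | b <;>
    simp only [deltaV_single, map_add, map_smul, smul_add, smul_smul, qInt_zero',
      zero_smul, mul_zero, zero_mul, add_zero, zero_add, Nat.add_sub_cancel,
      Nat.succ_sub_one, Nat.zero_sub, Nat.sub_zero, pow_zero, one_mul, mul_one,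
      map_zero, smul_zero] <;>
    ring_nf <;>
    match_scalars <;>
    simp only [hT1, hT2, hT3, one_pow, mul_one, one_mul, mul_zero, zero_mul,
      add_zero, zero_add]
  · linear_combination (q^6 * q^(b*6)) * qInt_triple q hS b
  · linear_combination q^4 * hS
  · linear_combination (q^6 * q^(b*4) * qInt (q^2) (2+b)) * hB b
  · linear_combination (q^6 * q^(b*6)) * qInt_triple q hS b
  · linear_combination qInt_triple q hS a
  · linear_combination (q^2 * qInt (q^2) (2+a) * qInt (q^2) (1+a)) * hS
  · linear_combination qInt_triple q hS a
  · linear_combination (q^2 * qInt (q^2) (2+a) * qInt (q^2) (1+a)) * hS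
  · linear_combination (q^4 * qInt (q^2) (2+a)) * hS
  · linear_combination qInt_triple q hS a
  · linear_combination (q^4 * q^(b*2) * qInt (q^2) (2+a) * qInt (q^2) (1+a)) * hC b
  · linear_combination (q^6 * q^(b*4) * qInt (q^2) (2+a) * qInt (q^2) (2+b)) * hB b
  · linear_combination (q^6 * q^(b*6)) * qInt_triple q hS b
end

section
/- Let K be a field, q a primitive 3rd root of unity, and let B_*(1) = ⊕_d B_d(1) with basis e^{k₁}⊗e^{k₂}⊗e^{k₃}, the differential δ as above, and the product (e^{i₁}⊗e^{i₂}⊗e^{i₃})·(e^{k₁}⊗e^{k₂}⊗e^{k₃}) = q^{c} · e^{i₁+k₁}⊗e^{i₂+k₂}⊗e^{i₃+k₃} for an appropriate scalar q^c depending on the exponents. Then for fixed k₁, k₂, k₃ with 3 | k₁ and 3 | k₂, the element e^{k₁}⊗e^{k₂}⊗e^{k₃} satisfies δ(e^{k₁}⊗e^{k₂}⊗e^{k₃}) = 0, and right multiplication by it defines an injective morphism of 3-complexes B_d(1)[k₂+2k₃] → B_{d+k₁+k₂+k₃}(1), where [t] denotes the degree shift by t. -/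
/-- A product on `B_*(1)` given on basis elements by coordinatewise addition of
exponents up to a power of `q`: `(e^{j})·(e^{k}) = q^{c j k} e^{j+k}`. -/
noncomputable def mulV {K : Type} [Field K] (q : K) (c : ℕ × ℕ × ℕ → ℕ × ℕ × ℕ → ℕ) :
    BV K →ₗ[K] BV K →ₗ[K] BV K :=
  Finsupp.linearCombination K (fun j : ℕ × ℕ × ℕ =>
    Finsupp.linearCombination K (fun k : ℕ × ℕ × ℕ =>
      (q ^ (c j k)) • Finsupp.single (j + k) (1 : K)))


/-!
Since `q²` is again a primitive cube root of unity, `[m]_{q²} = 0` whenever `3 ∣ m`, so both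
coefficients of `δ(e^{k₁}⊗e^{k₂}⊗e^{k₃})` vanish. The Leibniz rule with a cycle as right
factor then says that right multiplication by it commutes with `δ`. Injectivity holds because
right multiplication by a basis vector sends `e^j` to a nonzero multiple of `e^{j+k}`, and
`j ↦ j + k` is injective.
-/

open Finsupp

lemma qInt_eq_zero_of_pow_eq_one {K : Type} [Field K] {t : K} {m : ℕ} (ht : t ≠ 1)
    (hm : t ^ m = 1) : qInt t m = 0 := by
  rw [qInt, geom_sum_eq ht, hm, sub_self, zero_div]

lemma deltaV_single_eq_zero {K : Type} [Field K] {q : K} {k₁ k₂ k₃ : ℕ}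
    (h1 : qInt (q ^ 2) k₁ = 0) (h2 : qInt (q ^ 2) k₂ = 0) :
    deltaV q (single ((k₁, k₂, k₃) : ℕ × ℕ × ℕ) (1 : K)) = 0 := by
  simp [deltaV, linearCombination_single, h1, h2]

lemma mulV_single_right_apply_add {K : Type} [Field K] (q : K)
    (c : ℕ × ℕ × ℕ → ℕ × ℕ × ℕ → ℕ) (k : ℕ × ℕ × ℕ) (a : BV K) (j : ℕ × ℕ × ℕ) :
    mulV q c a (single k 1) (j + k) = q ^ c j k * a j := by
  induction a using Finsupp.induction_linear with
  | zero => simp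
  | add f g hf hg => simp [hf, hg, mul_add]
  | single i r =>
    have h : mulV q c (single i r) (single k 1) = (r * q ^ c i k) • single (i + k) 1 := by
      simp [mulV, linearCombination_single, mul_smul]
    simp only [h, Finsupp.smul_apply, single_apply, add_left_inj]
    by_cases hij : i = j
    · simp [hij, mul_comm]
    · simp [hij]

lemma injective_mulV_flip_single {K : Type} [Field K] {q : K} (hq : q ≠ 0)
    (c : ℕ × ℕ × ℕ → ℕ × ℕ × ℕ → ℕ) (k : ℕ × ℕ × ℕ) :
    Function.Injective ((mulV q c).flip (single k (1 : K))) := by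
  intro a b hab
  ext j
  have h := congrArg (· (j + k)) hab
  simp only [LinearMap.flip_apply, mulV_single_right_apply_add] at h
  exact mul_left_cancel₀ (pow_ne_zero _ hq) h

lemma deltaV_comp_mulV_flip_single {K : Type} [Field K] {q : K}
    {c : ℕ × ℕ × ℕ → ℕ × ℕ × ℕ → ℕ} {k : ℕ × ℕ × ℕ}
    (hLeibniz : ∀ j : ℕ × ℕ × ℕ,
      deltaV q (mulV q c (single j (1 : K)) (single k 1))
        = mulV q c (deltaV q (single j 1)) (single k 1)
          + q ^ (2 * (j.2.1 + 2 * j.2.2)) • mulV q c (single j 1) (deltaV q (single k 1)))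
    (hk : deltaV q (single k (1 : K)) = 0) :
    (deltaV q).comp ((mulV q c).flip (single k 1))
      = ((mulV q c).flip (single k 1)).comp (deltaV q) := by
  ext j : 2
  simp [hLeibniz j, hk]

/-- assume the product satisfies the Leibniz rule
`δ(ab) = δ(a)b + q^{2·deg a} a δ(b)` on basis elements.  If `3 ∣ k₁` and `3 ∣ k₂`,
then `δ(e^{k₁}⊗e^{k₂}⊗e^{k₃}) = 0`, and right multiplication by `e^{k₁}⊗e^{k₂}⊗e^{k₃}`
is an injective morphism of 3-complexes `B_d(1)[k₂+2k₃] → B_{d+k₁+k₂+k₃}(1)`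
(on the total space: it is injective and commutes with `δ`). -/
theorem rightMul_is_complex_morphism {K : Type} [Field K] (q : K)
    (hq : IsPrimitiveRoot q 3) (c : ℕ × ℕ × ℕ → ℕ × ℕ × ℕ → ℕ)
    (hLeibniz : ∀ j k : ℕ × ℕ × ℕ,
      deltaV q (mulV q c (Finsupp.single j (1 : K)) (Finsupp.single k (1 : K)))
        = mulV q c (deltaV q (Finsupp.single j (1 : K))) (Finsupp.single k (1 : K))
          + q ^ (2 * (j.2.1 + 2 * j.2.2)) •
            mulV q c (Finsupp.single j (1 : K)) (deltaV q (Finsupp.single k (1 : K))))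
    (k₁ k₂ k₃ : ℕ) (h1 : 3 ∣ k₁) (h2 : 3 ∣ k₂) :
    deltaV q (Finsupp.single ((k₁, k₂, k₃) : ℕ × ℕ × ℕ) (1 : K)) = 0 ∧
    Function.Injective ((mulV q c).flip (Finsupp.single ((k₁, k₂, k₃) : ℕ × ℕ × ℕ) (1 : K))) ∧
    (deltaV q).comp ((mulV q c).flip (Finsupp.single ((k₁, k₂, k₃) : ℕ × ℕ × ℕ) (1 : K)))
      = ((mulV q c).flip (Finsupp.single ((k₁, k₂, k₃) : ℕ × ℕ × ℕ) (1 : K))).comp (deltaV q) := by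
  have hq2 : IsPrimitiveRoot (q ^ 2) 3 := hq.pow_of_coprime 2 (by norm_num)
  have hqInt {m : ℕ} (hm : 3 ∣ m) : qInt (q ^ 2) m = 0 :=
    qInt_eq_zero_of_pow_eq_one (hq2.ne_one (by norm_num)) ((hq2.pow_eq_one_iff_dvd m).2 hm)
  have hcycle := deltaV_single_eq_zero (k₃ := k₃) (hqInt h1) (hqInt h2)
  exact ⟨hcycle, injective_mulV_flip_single (hq.ne_zero (by norm_num)) c _,
    deltaV_comp_mulV_flip_single (fun j => hLeibniz j _) hcycle⟩
end
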